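/- arXiv:1404.3385 — 4 statements merged into one kernel-verified Lean document; each statement's English description precedes it below -/
import Mathlib

section
/- Let G be a simple graph on n vertices and let u and v be nonadjacent vertices in G with d_G(u) + d_G(v) ≥ n. Then G is Hamiltonian if and only if G + uv (the graph obtained by adding the edge uv) is Hamiltonian. -/
/-!
If a Hamiltonian cycle of `G + uv` avoids `uv` it already lies in `G`. Otherwise deleting `uv`
leaves a Hamiltonian path `u = p₀, p₁, …, pₙ = v` in `G`, with `n + 1` vertices. The sets
`{i < n | v ~ pᵢ}` and `{i < n | u ~ pᵢ₊₁}` have sizes `d(v)` and `d(u)`, whose sum is at least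
`n + 1`, so some index `i` lies in both. Then `u, p₁, …, pᵢ, v, pₙ₋₁, …, pᵢ₊₁, u` is a
Hamiltonian cycle of `G`.
-/

namespace SimpleGraph

variable {V : Type*} {G : SimpleGraph V} {u v w : V}

namespace Walk

lemma edges_subset_edgeSet_of_sup_fromEdgeSet {e : Sym2 V} (p : (G ⊔ fromEdgeSet {e}).Walk u v)
    (he : e ∉ p.edges) ⦃e' : Sym2 V⦄ (he' : e' ∈ p.edges) : e' ∈ G.edgeSet := by
  have h := p.edges_subset_edgeSet he'
  have hne : e' ≠ e := ne_of_mem_of_not_mem he' he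
  simp only [edgeSet_sup, edgeSet_fromEdgeSet, Set.mem_union, Set.mem_sdiff,
    Set.mem_singleton_iff] at h
  tauto

lemma IsPath.exists_isCycle_of_adj_getVert {p : G.Walk u v} (hp : p.IsPath) (huv : ¬G.Adj u v)
    {i : ℕ} (hi : i < p.length) (hv : G.Adj v (p.getVert i)) (hu : G.Adj u (p.getVert (i + 1))) :
    ∃ c : G.Walk u u, c.IsCycle ∧ c.length = p.length + 1 := by
  let q : G.Walk (p.getVert (i + 1)) u := (p.drop (i + 1)).append (cons hv (p.take i).reverse)
  have hlen : q.length = p.length := by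
    simp only [q, length_append, drop_length, length_cons, length_reverse, take_length]
    omega
  have hperm : q.support.Perm p.support := by
    simp only [q, support_append, support_cons, List.tail_cons, support_reverse, support_take,
      drop_support_eq_support_drop_min, Nat.min_eq_left hi]
    exact ((List.reverse_perm _).append_left _).trans
      (List.perm_append_comm.trans (.of_eq (List.take_append_drop _ _)))
  -- for `p.length = 1` the closed walk below would be `u, v, u`
  have hlen2 : 2 ≤ p.length := by
    by_contra! h
    exact huv (adj_of_length_eq_one (p := p) (by omega))
  refine ⟨cons hu q, isCycle_iff_isPath_tail_and_le_length.mpr ⟨?_, ?_⟩, by simp [hlen]⟩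
  · rw [tail_cons]
    exact (isPath_copy _ _ _).mpr (IsPath.mk' (hperm.nodup_iff.mpr hp.support_nodup))
  · simp only [length_cons, hlen]
    omega

lemma IsCycle.exists_isPath_of_snd_eq {c : G.Walk u u} (hc : c.IsCycle) (hv : c.snd = v) :
    ∃ p : G.Walk u v, p.IsPath ∧ s(u, v) ∉ p.edges ∧ p.length + 1 = c.length := by
  have hcons := c.cons_tail_eq hc.not_nil
  have hne : s(u, c.snd) ∉ c.tail.edges := ((cons_isCycle_iff _ _).mp (hcons ▸ hc)).2
  subst hv
  refine ⟨c.tail.reverse, hc.isPath_tail.reverse, ?_, ?_⟩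
  · rwa [edges_reverse, List.mem_reverse]
  · rw [length_reverse, length_tail_add_one hc.not_nil]

lemma IsCycle.exists_isPath_of_mem_edges {c : G.Walk u u} (hc : c.IsCycle)
    (he : s(u, v) ∈ c.edges) :
    ∃ p : G.Walk u v, p.IsPath ∧ s(u, v) ∉ p.edges ∧ p.length + 1 = c.length := by
  have hcons := c.cons_tail_eq hc.not_nil
  rw [← hcons, edges_cons, List.mem_cons] at he
  rcases he with he | he
  · exact hc.exists_isPath_of_snd_eq (Sym2.congr_right.mp he).symm
  · have hv : c.reverse.snd = v := by
      have hnil : ¬c.tail.Nil := edges_eq_nil.not.mp (List.ne_nil_of_mem he)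
      rw [snd_reverse, hc.isPath_tail.eq_penultimate_of_mem_edges he]
      conv_lhs => rw [← hcons]
      exact penultimate_cons_of_not_nil _ _ hnil
    simpa using hc.reverse.exists_isPath_of_snd_eq hv

variable [DecidableEq V] [Fintype V]

lemma IsHamiltonianCycle.exists_isHamiltonian_of_mem_edges {c : G.Walk w w}
    (hc : c.IsHamiltonianCycle) (he : s(u, v) ∈ c.edges) :
    ∃ p : G.Walk u v, p.IsHamiltonian ∧ s(u, v) ∉ p.edges := by
  have hu : u ∈ c.support := c.fst_mem_support_of_mem_edges he
  obtain ⟨p, hp, hpe, hlen⟩ := (hc.isCycle.rotate hu).exists_isPath_of_mem_edges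
    ((c.rotate_edges u hu).perm.mem_iff.mpr he)
  refine ⟨p, isHamiltonian_iff_isPath_and_length_eq.mpr ⟨hp, ?_⟩, hpe⟩
  rw [length_rotate, hc.length_eq] at hlen
  omega

lemma IsHamiltonian.sum_getVert {M : Type*} [AddCommMonoid M] {p : G.Walk u v}
    (hp : p.IsHamiltonian) (f : V → M) :
    ∑ i ∈ Finset.range (p.length + 1), f (p.getVert i) = ∑ x, f x := by
  refine Finset.sum_nbij p.getVert (fun _ _ ↦ Finset.mem_univ _) ?_ ?_ (fun _ _ ↦ rfl)
  · intro i hi j hj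
    exact hp.isPath.getVert_injOn (by simpa [Nat.lt_succ_iff] using hi)
      (by simpa [Nat.lt_succ_iff] using hj)
  · intro x _
    obtain ⟨i, hi, hle⟩ := mem_support_iff_exists_getVert.mp (hp.mem_support x)
    exact ⟨i, by simpa [Nat.lt_succ_iff] using hle, hi⟩

variable [DecidableRel G.Adj]

lemma IsHamiltonian.degree_eq_sum {p : G.Walk u v} (hp : p.IsHamiltonian) (x : V) :
    G.degree x = ∑ i ∈ Finset.range (p.length + 1), if G.Adj x (p.getVert i) then 1 else 0 := by
  rw [← card_neighborFinset_eq_degree, neighborFinset_eq_filter, Finset.card_filter]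
  exact (hp.sum_getVert _).symm

lemma IsHamiltonian.exists_adj_getVert_of_card_le {p : G.Walk u v} (hp : p.IsHamiltonian)
    (hdeg : Fintype.card V ≤ G.degree u + G.degree v) :
    ∃ i < p.length, G.Adj v (p.getVert i) ∧ G.Adj u (p.getVert (i + 1)) := by
  have hcard : Fintype.card V = p.length + 1 := by
    have := Fintype.card_pos_iff.mpr ⟨u⟩
    rw [hp.length_eq]
    omega
  have hu : G.degree u = ∑ i ∈ Finset.range p.length,
      if G.Adj u (p.getVert (i + 1)) then 1 else 0 := by
    rw [hp.degree_eq_sum u, Finset.sum_range_succ']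
    simp
  have hv : G.degree v = ∑ i ∈ Finset.range p.length, if G.Adj v (p.getVert i) then 1 else 0 := by
    rw [hp.degree_eq_sum v, Finset.sum_range_succ]
    simp
  by_contra! h
  have : G.degree u + G.degree v ≤ ∑ i ∈ Finset.range p.length, 1 := by
    rw [hu, hv, ← Finset.sum_add_distrib]
    refine Finset.sum_le_sum fun i hi ↦ ?_
    have := h i (Finset.mem_range.mp hi)
    split_ifs <;> simp_all
  simp only [Finset.sum_const, Finset.card_range, smul_eq_mul, mul_one] at this
  omega

end Walk

end SimpleGraph

open SimpleGraph Walk in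
theorem stmt_0_general {V : Type*} [Fintype V] [DecidableEq V] (G : SimpleGraph V)
    [DecidableRel G.Adj] (u v : V) (hnadj : ¬ G.Adj u v)
    (hdeg : Fintype.card V ≤ G.degree u + G.degree v) :
    G.IsHamiltonian ↔ (G ⊔ SimpleGraph.fromEdgeSet {s(u, v)}).IsHamiltonian := by
  refine ⟨fun h ↦ h.mono le_sup_left, fun h hcard ↦ ?_⟩
  obtain ⟨w, c, hc⟩ := h hcard
  by_cases he : s(u, v) ∈ c.edges
  · obtain ⟨p, hp, hpe⟩ := hc.exists_isHamiltonian_of_mem_edges he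
    let q := p.transfer G (p.edges_subset_edgeSet_of_sup_fromEdgeSet hpe)
    have hq : q.IsHamiltonian := fun x ↦ by rw [support_transfer]; exact hp x
    obtain ⟨i, hi, hvi, hui⟩ := hq.exists_adj_getVert_of_card_le hdeg
    obtain ⟨c', hc', hlen⟩ := hq.isPath.exists_isCycle_of_adj_getVert hnadj hi hvi hui
    refine ⟨u, c', isHamiltonianCycle_iff_isCycle_and_length_eq.mpr ⟨hc', ?_⟩⟩
    have := Fintype.card_pos_iff.mpr ⟨u⟩
    rw [hlen, hq.length_eq]
    omega
  · refine ⟨w, c.transfer G (c.edges_subset_edgeSet_of_sup_fromEdgeSet he), ?_⟩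
    exact isHamiltonianCycle_iff_isCycle_and_length_eq.mpr
      ⟨hc.isCycle.transfer _, by rw [length_transfer, hc.length_eq]⟩

/-- Bondy–Chvátal lemma: if `u` and `v` are nonadjacent vertices of a simple graph `G`
on `n` vertices with `d_G(u) + d_G(v) ≥ n`, then `G` is Hamiltonian iff `G + uv` is. -/
theorem stmt_0 {V : Type*} [Fintype V] [DecidableEq V] (G : SimpleGraph V)
    [DecidableRel G.Adj] (u v : V) (huv : u ≠ v) (hnadj : ¬ G.Adj u v)
    (hdeg : Fintype.card V ≤ G.degree u + G.degree v) :
    G.IsHamiltonian ↔ (G ⊔ SimpleGraph.fromEdgeSet {s(u, v)}).IsHamiltonian :=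
  stmt_0_general G u v hnadj hdeg
end

section
/- Let G_1 be a simple graph on n vertices, n ≥ 3, such that any two adjacent vertices x, y satisfy d_{G_1}(x) + d_{G_1}(y) ≥ n − 1, and suppose the complement of G_1 is not Hamiltonian. Let T be the set of isolated vertices of G_1, R the set of vertices of degree at least (n−1)/2, and Q the remaining vertices. Then |R ∪ Q| > |T|. -/
/-!
Since `n ≥ 3`, no isolated vertex has degree `≥ (n - 1) / 2`, so `R ∪ Q` is the complement of
`T`. An isolated vertex of `G₁` is adjacent in `G₁ᶜ` to every other vertex. If `|Tᶜ| ≤ |T|`, place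
the vertices of `Tᶜ` at odd positions of an `n`-cycle and those of `T` elsewhere: no two odd
positions are consecutive, so every edge of the cycle has an endpoint in `T` and the cycle lies
in `G₁ᶜ`, which is therefore Hamiltonian.
-/

theorem Fin.exists_finset_card_eq_forall_odd {n k : ℕ} (hk : 2 * k ≤ n) :
    ∃ A : Finset (Fin n), A.card = k ∧ ∀ i ∈ A, Odd (i : ℕ) := by
  refine ⟨Finset.univ.map ⟨fun j : Fin k => ⟨2 * j + 1, by omega⟩, fun a b h => ?_⟩,
    by simp, ?_⟩
  · simpa [Fin.ext_iff] using h
  · simp only [Finset.mem_map, Finset.mem_univ, true_and, forall_exists_index]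
    rintro _ j rfl
    exact odd_two_mul_add_one _

namespace SimpleGraph

open Finset

lemma cycleGraph_not_adj_of_odd {n : ℕ} {i j : Fin n} (hi : Odd (i : ℕ)) (hj : Odd (j : ℕ)) :
    ¬(cycleGraph n).Adj i j := by
  wlog hji : j ≤ i generalizing i j
  · exact fun h => this hj hi (le_of_not_ge hji) h.symm
  rcases hji.eq_or_lt with rfl | hlt
  · exact (cycleGraph n).irrefl
  rw [cycleGraph_adj', Fin.coe_sub_iff_le.mpr hlt.le, Fin.coe_sub_iff_lt.mpr hlt]
  rw [Nat.odd_iff] at hi hj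
  omega

lemma compl_adj_of_degree_eq_zero {V : Type*} [Fintype V] {G : SimpleGraph V}
    [DecidableRel G.Adj] {x y : V} (hx : G.degree x = 0) (hxy : x ≠ y) : Gᶜ.Adj x y :=
  ⟨hxy, fun h => ((G.degree_pos_iff_exists_adj x).mpr ⟨y, h⟩).ne' hx⟩

variable {V : Type*} [Fintype V] [DecidableEq V] {G : SimpleGraph V}

theorem IsHamiltonian.of_cycleGraph_isContained (h3 : 3 ≤ Fintype.card V)
    (h : cycleGraph (Fintype.card V) ⊑ G) : G.IsHamiltonian := by
  obtain ⟨v, p, hcyc, hlen⟩ := (cycleGraph_isContained_iff (by omega)).mp h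
  exact fun _ => ⟨v, p, Walk.isHamiltonianCycle_iff_isCycle_and_length_eq.mpr ⟨hcyc, hlen⟩⟩

theorem isHamiltonian_of_forall_adj_of_two_mul_card_compl_le (S : Finset V)
    (hS : ∀ x ∈ S, ∀ y, x ≠ y → G.Adj x y) (hcard : 2 * #Sᶜ ≤ Fintype.card V)
    (h3 : 3 ≤ Fintype.card V) : G.IsHamiltonian := by
  obtain ⟨A, hAcard, hAodd⟩ := Fin.exists_finset_card_eq_forall_odd hcard
  let e₀ : Fin (Fintype.card V) ≃ V := (Fintype.equivFin V).symm
  obtain ⟨σ, hσ⟩ :=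
    Equiv.Perm.exists_map_finset_eq (A.map e₀.toEmbedding) Sᶜ (by rw [card_map, hAcard])
  let e := e₀.trans σ
  have he : ∀ i, i ∉ A → e i ∈ S := by
    intro i hi
    by_contra h
    rw [← mem_compl, ← hσ, Finset.map_map] at h
    exact hi ((mem_map' _).mp h)
  refine .of_cycleGraph_isContained h3 ⟨⟨⟨e, fun {i j} hij => ?_⟩, e.injective⟩⟩
  have hne : e i ≠ e j := e.injective.ne hij.ne
  by_cases hi : i ∈ A
  · have hj : j ∉ A := fun hj => cycleGraph_not_adj_of_odd (hAodd i hi) (hAodd j hj) hij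
    exact (hS _ (he j hj) _ hne.symm).symm
  · exact hS _ (he i hi) _ hne

end SimpleGraph

theorem stmt_4_general {V : Type*} [Fintype V] [DecidableEq V] (G₁ : SimpleGraph V)
    [DecidableRel G₁.Adj] (n : ℕ) (hn : n = Fintype.card V) (hn3 : 3 ≤ n)
    (hnotHam : ¬ (G₁ᶜ).IsHamiltonian)
    (T R Q : Set V)
    (hT : T = {v : V | G₁.degree v = 0})
    (hR : R = {v : V | n - 1 ≤ 2 * G₁.degree v})
    (hQ : Q = Set.univ \ (T ∪ R)) :
    T.ncard < (R ∪ Q).ncard := by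
  have hRQ : R ∪ Q = Tᶜ := by
    subst hT hR hQ
    ext v
    simp only [Set.mem_union, Set.mem_sdiff, Set.mem_univ, Set.mem_ofPred_eq, Set.mem_compl_iff,
      true_and]
    omega
  obtain ⟨S, rfl⟩ : ∃ S : Finset V, T = S := ⟨T.toFinite.toFinset, by simp⟩
  rw [hRQ, ← Finset.coe_compl, Set.ncard_coe_finset, Set.ncard_coe_finset]
  by_contra! hle
  refine hnotHam <| SimpleGraph.isHamiltonian_of_forall_adj_of_two_mul_card_compl_le S
    (fun x hx y hxy => ?_) (by have := S.card_add_card_compl; omega) (hn ▸ hn3)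
  have hx : x ∈ (S : Set V) := hx
  rw [hT] at hx
  exact SimpleGraph.compl_adj_of_degree_eq_zero hx hxy

/-- If any two adjacent vertices of `G₁` have degree sum at least `n - 1`, the complement
of `G₁` is not Hamiltonian, `T` is the set of isolated vertices, `R` the set of vertices
of degree at least `(n-1)/2` and `Q` the remaining vertices, then `|R ∪ Q| > |T|`. -/
theorem stmt_4 {V : Type*} [Fintype V] [DecidableEq V] (G₁ : SimpleGraph V)
    [DecidableRel G₁.Adj] (n : ℕ) (hn : n = Fintype.card V) (hn3 : 3 ≤ n)
    (hdeg : ∀ x y : V, G₁.Adj x y → n - 1 ≤ G₁.degree x + G₁.degree y)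
    (hnotHam : ¬ (G₁ᶜ).IsHamiltonian)
    (T R Q : Set V)
    (hT : T = {v : V | G₁.degree v = 0})
    (hR : R = {v : V | n - 1 ≤ 2 * G₁.degree v})
    (hQ : Q = Set.univ \ (T ∪ R)) :
    T.ncard < (R ∪ Q).ncard :=
  stmt_4_general G₁ n hn hn3 hnotHam T R Q hT hR hQ
end

section
/- Let G_1 be a simple graph on n vertices in which any two adjacent vertices x, y satisfy d(x) + d(y) ≥ n − 1. Let T be the set of isolated vertices, R the set of vertices of degree at least (n−1)/2, Q the rest, and suppose |R| = |T|, R ≠ ∅, and Q ≠ ∅. Then every vertex of R is adjacent (in G_1) to every vertex of Q, and every two distinct vertices of R are adjacent in G_1; that is, the bipartite subgraph between R and Q is complete bipartite and R induces a complete subgraph. -/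
/-!
Let `T` be the isolated vertices and `R` the vertices of degree at least `(n-1)/2`. A
non-isolated vertex misses itself and `T`, so its degree is at most `n - 1 - |T|`; with the
degree-sum condition on an edge `qx`, every non-isolated `q` therefore has degree at least `|T|`.
A vertex `q ∈ Q` has all its neighbours in `R` (two endpoints below `(n-1)/2` cannot reach the
sum `n - 1`), and `|R| = |T| ≤ d(q)`, so `N(q) = R`. Then every `x ∈ R` is adjacent to `q`,
which has degree `|T|`, so `d(x) ≥ n - 1 - |T|`: the neighbourhood of `x` is everything outside
`T ∪ {x}`, and in particular all of `R \ {x}`.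
-/

open Finset

namespace SimpleGraph

variable {V : Type*} [Fintype V] (G : SimpleGraph V) [DecidableRel G.Adj]

def isolatedFinset : Finset V := {v | G.degree v = 0}

def halfDegreeFinset : Finset V := {v | Fintype.card V - 1 ≤ 2 * G.degree v}

def AdjDegreeSumGe (k : ℕ) : Prop := ∀ x y, G.Adj x y → k ≤ G.degree x + G.degree y

variable {G}

@[simp]
lemma mem_isolatedFinset {v : V} : v ∈ G.isolatedFinset ↔ G.degree v = 0 := by
  simp [isolatedFinset]

@[simp]
lemma mem_halfDegreeFinset {v : V} :
    v ∈ G.halfDegreeFinset ↔ Fintype.card V - 1 ≤ 2 * G.degree v := by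
  simp [halfDegreeFinset]

lemma neighborFinset_subset_compl_insert_isolatedFinset [DecidableEq V] (x : V) :
    G.neighborFinset x ⊆ (insert x G.isolatedFinset)ᶜ := by
  intro y hy
  rw [mem_neighborFinset] at hy
  simp only [mem_compl, mem_insert, mem_isolatedFinset, not_or]
  exact ⟨hy.ne', hy.degree_pos_right.ne'⟩

lemma degree_add_card_isolatedFinset_lt {x : V} (hx : G.degree x ≠ 0) :
    G.degree x + #G.isolatedFinset < Fintype.card V := by
  classical
  have hxT : x ∉ G.isolatedFinset := by simpa using hx
  have := card_le_card (neighborFinset_subset_compl_insert_isolatedFinset (G := G) x)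
  rw [card_compl, card_insert_of_notMem hxT, card_neighborFinset_eq_degree] at this
  omega

lemma adj_of_card_le_degree_add {x y : V} (hx₀ : G.degree x ≠ 0)
    (hx : Fintype.card V ≤ G.degree x + #G.isolatedFinset + 1) (hy : G.degree y ≠ 0)
    (hxy : x ≠ y) : G.Adj x y := by
  classical
  have hxT : x ∉ G.isolatedFinset := by simpa using hx₀
  have hN : G.neighborFinset x = (insert x G.isolatedFinset)ᶜ := by
    refine eq_of_subset_of_card_le (neighborFinset_subset_compl_insert_isolatedFinset x) ?_
    rw [card_compl, card_insert_of_notMem hxT, card_neighborFinset_eq_degree]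
    omega
  have hy' : y ∈ (insert x G.isolatedFinset)ᶜ := by simp [hy, hxy.symm]
  rwa [← hN, mem_neighborFinset] at hy'

lemma card_isolatedFinset_le_degree_of_adj (hG : G.AdjDegreeSumGe (Fintype.card V - 1))
    {q x : V} (h : G.Adj q x) : #G.isolatedFinset ≤ G.degree q := by
  have := degree_add_card_isolatedFinset_lt h.degree_pos_right.ne'
  have := hG q x h
  omega

lemma neighborFinset_subset_halfDegreeFinset (hG : G.AdjDegreeSumGe (Fintype.card V - 1))
    {q : V} (hq : q ∉ G.halfDegreeFinset) : G.neighborFinset q ⊆ G.halfDegreeFinset := by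
  intro x hx
  rw [mem_neighborFinset] at hx
  have := hG q x hx
  simp only [mem_halfDegreeFinset] at hq ⊢
  omega

lemma neighborFinset_eq_halfDegreeFinset (hG : G.AdjDegreeSumGe (Fintype.card V - 1))
    (hRT : #G.halfDegreeFinset ≤ #G.isolatedFinset) {q : V} (hq₀ : G.degree q ≠ 0)
    (hq : q ∉ G.halfDegreeFinset) : G.neighborFinset q = G.halfDegreeFinset := by
  obtain ⟨x, hx⟩ := G.degree_pos_iff_exists_adj q |>.mp (Nat.pos_of_ne_zero hq₀)
  refine eq_of_subset_of_card_le (neighborFinset_subset_halfDegreeFinset hG hq) ?_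
  rw [card_neighborFinset_eq_degree]
  exact hRT.trans (card_isolatedFinset_le_degree_of_adj hG hx)

lemma isClique_neighborSet_of_degree_le (hG : G.AdjDegreeSumGe (Fintype.card V - 1)) {q : V}
    (hq : G.degree q ≤ #G.isolatedFinset) : G.IsClique (G.neighborSet q) := by
  intro x hx y hy hxy
  have := hG q x hx
  have := degree_add_card_isolatedFinset_lt hx.degree_pos_right.ne'
  exact adj_of_card_le_degree_add hx.degree_pos_right.ne' (by omega) hy.degree_pos_right.ne' hxy

end SimpleGraph

open SimpleGraph

theorem stmt_5_general {V : Type*} [Fintype V] (G₁ : SimpleGraph V)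
    [DecidableRel G₁.Adj] (n : ℕ) (hn : n = Fintype.card V)
    (hdeg : ∀ x y : V, G₁.Adj x y → n - 1 ≤ G₁.degree x + G₁.degree y)
    (T R Q : Set V)
    (hT : T = {v : V | G₁.degree v = 0})
    (hR : R = {v : V | n - 1 ≤ 2 * G₁.degree v})
    (hQ : Q = Set.univ \ (T ∪ R))
    (hRT : R.ncard = T.ncard) (hQne : Q.Nonempty) :
    (∀ x ∈ R, ∀ y ∈ Q, G₁.Adj x y) ∧ (∀ x ∈ R, ∀ y ∈ R, x ≠ y → G₁.Adj x y) := by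
  subst hn
  have hT' : T = G₁.isolatedFinset := by ext; simp [hT]
  have hR' : R = G₁.halfDegreeFinset := by ext; simp [hR]
  rw [hT', hR', Set.ncard_coe_finset, Set.ncard_coe_finset] at hRT
  have hNQ : ∀ q ∈ Q, G₁.neighborFinset q = G₁.halfDegreeFinset := by
    intro q hq
    simp only [hQ, hT', hR', Set.mem_sdiff, Set.mem_union, mem_coe, not_or] at hq
    exact neighborFinset_eq_halfDegreeFinset hdeg hRT.le (by simpa using hq.2.1) hq.2.2
  obtain ⟨q₀, hq₀⟩ := hQne
  have hRN : R = G₁.neighborSet q₀ := by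
    rw [hR', ← hNQ q₀ hq₀, coe_neighborFinset]
  refine ⟨fun x hx y hy => ?_, hRN ▸ isClique_neighborSet_of_degree_le hdeg ?_⟩
  · rw [hR', ← hNQ y hy, mem_coe, mem_neighborFinset] at hx
    exact hx.symm
  · rw [← card_neighborFinset_eq_degree, hNQ q₀ hq₀, hRT]

/-- If any two adjacent vertices of `G₁` have degree sum at least `n - 1`, `T` is the set
of isolated vertices, `R` the set of vertices of degree at least `(n-1)/2`,
`Q = V \ (T ∪ R)`, `|R| = |T|`, and `R, Q` are nonempty, then every vertex of `R` is
adjacent to every vertex of `Q`, and any two distinct vertices of `R` are adjacent. -/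
theorem stmt_5 {V : Type*} [Fintype V] [DecidableEq V] (G₁ : SimpleGraph V)
    [DecidableRel G₁.Adj] (n : ℕ) (hn : n = Fintype.card V)
    (hdeg : ∀ x y : V, G₁.Adj x y → n - 1 ≤ G₁.degree x + G₁.degree y)
    (T R Q : Set V)
    (hT : T = {v : V | G₁.degree v = 0})
    (hR : R = {v : V | n - 1 ≤ 2 * G₁.degree v})
    (hQ : Q = Set.univ \ (T ∪ R))
    (hRT : R.ncard = T.ncard) (hRne : R.Nonempty) (hQne : Q.Nonempty) :
    (∀ x ∈ R, ∀ y ∈ Q, G₁.Adj x y) ∧ (∀ x ∈ R, ∀ y ∈ R, x ≠ y → G₁.Adj x y) :=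
  stmt_5_general G₁ n hn hdeg T R Q hT hR hQ hRT hQne
end

section
/- Let r ≥ 5, f ≤ r − 3, and let nonnegative reals u_{f+1} ≤ u_{f+2} ≤ ... ≤ u_{r−1} satisfy: the product ∏_{i=f+1}^{r−1} u_i ≤ (r−2)·∑_{i=f+1}^{r−1} u_i + f·C, where C = binom(4r, r−1). Suppose u_{f+1} ≥ r − 1 and u_{r−1} ≥ (n−1)/2 with n > 6r·C. Then one reaches a contradiction; that is, under these hypotheses no such numbers exist, so in fact u_{f+1} ≤ r − 2. -/
/-!
Write `k = r - 2`, `U = u (r - 1)`; every term lies in `[k + 1, U]` and `U ≥ 3rC`.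
If there are at least three terms, the product is at least `(k + 1)² U` while the right-hand side
is at most `k (k + 1) U + f C`, so `(k + 1) U ≤ f C`, which is absurd.
If there are exactly two terms `x ≤ U`, then `(x - k)(U - k) ≤ k² + f C` with `x - k ≥ 1` bounds
`U ≤ k (k + 1) + f C`, again absurd because `C ≥ r`.
-/

open Finset

lemma pow_mul_le_prod_Icc {u : ℕ → ℕ} {a b L : ℕ} (hab : a ≤ b)
    (hL : ∀ i ∈ Icc a b, L ≤ u i) : L ^ (b - a) * u b ≤ ∏ i ∈ Icc a b, u i := by
  rw [← Ico_insert_right hab, prod_insert right_notMem_Ico, mul_comm]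
  gcongr
  simpa using pow_card_le_prod (Ico a b) u L fun i hi => hL i (Ico_subset_Icc_self hi)

lemma sum_Icc_le_mul {u : ℕ → ℕ} {a b : ℕ} (hu : ∀ i ∈ Icc a b, u i ≤ u b) :
    ∑ i ∈ Icc a b, u i ≤ (b + 1 - a) * u b := by
  simpa using sum_le_card_nsmul (Icc a b) u (u b) hu

lemma le_of_mul_le_mul_add {k x y c : ℕ} (hx : k + 1 ≤ x) (h : x * y ≤ k * (x + y) + c) :
    y ≤ k * (k + 1) + c := by
  by_contra! hy
  obtain ⟨a, rfl⟩ := Nat.exists_eq_add_of_le hx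
  obtain ⟨b, rfl⟩ := Nat.exists_eq_add_of_le (show k ≤ y by nlinarith)
  nlinarith

lemma le_of_prod_Icc_succ_le {u : ℕ → ℕ} {a k c : ℕ} (hx : k + 1 ≤ u a)
    (h : ∏ i ∈ Icc a (a + 1), u i ≤ k * ∑ i ∈ Icc a (a + 1), u i + c) :
    u (a + 1) ≤ k * (k + 1) + c := by
  rw [prod_Icc_succ_top (by omega), sum_Icc_succ_top (by omega), Icc_self, prod_singleton,
    sum_singleton] at h
  exact le_of_mul_le_mul_add hx h

lemma mul_le_of_prod_Icc_le {u : ℕ → ℕ} {a b k c : ℕ} (hab : a + 2 ≤ b) (hlen : b + 1 - a ≤ k + 1)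
    (hlow : ∀ i ∈ Icc a b, k + 1 ≤ u i) (hup : ∀ i ∈ Icc a b, u i ≤ u b)
    (h : ∏ i ∈ Icc a b, u i ≤ k * ∑ i ∈ Icc a b, u i + c) :
    (k + 1) * u b ≤ c := by
  have key : (k + 1) ^ 2 * u b ≤ k * ((k + 1) * u b) + c :=
    calc (k + 1) ^ 2 * u b ≤ (k + 1) ^ (b - a) * u b := by
          gcongr <;> omega
      _ ≤ ∏ i ∈ Icc a b, u i := pow_mul_le_prod_Icc (by omega) hlow
      _ ≤ k * ∑ i ∈ Icc a b, u i + c := h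
      _ ≤ k * ((b + 1 - a) * u b) + c := by gcongr; exact sum_Icc_le_mul hup
      _ ≤ k * ((k + 1) * u b) + c := by gcongr
  nlinarith

theorem stmt_8_general (r f n : ℕ) (hf : f + 3 ≤ r)
    (hn : 6 * r * Nat.choose (4 * r) (r - 1) < n)
    (u : ℕ → ℕ)
    (hmono : ∀ i j, f + 1 ≤ i → i ≤ j → j ≤ r - 1 → u i ≤ u j)
    (hlast : n - 1 ≤ 2 * u (r - 1))
    (hps : ∏ i ∈ Finset.Icc (f + 1) (r - 1), u i ≤
      (r - 2) * ∑ i ∈ Finset.Icc (f + 1) (r - 1), u i + f * Nat.choose (4 * r) (r - 1))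
    (hfirst : r - 1 ≤ u (f + 1)) :
    False := by
  set C := Nat.choose (4 * r) (r - 1)
  have hC : r ≤ C :=
    calc r = Nat.choose (r - 1 + 1) (r - 1) := by rw [Nat.choose_succ_self_right]; omega
      _ ≤ C := Nat.choose_le_choose _ (by omega)
  have hU : 3 * r * C ≤ u (r - 1) := by
    have : 6 * r * C = 2 * (3 * r * C) := by ring
    omega
  obtain ⟨k, rfl⟩ : ∃ k, r = k + 2 := ⟨r - 2, by omega⟩
  rw [show k + 2 - 1 = k + 1 by omega, Nat.add_sub_cancel] at *
  have hlow : ∀ i ∈ Icc (f + 1) (k + 1), k + 1 ≤ u i := fun i hi =>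
    hfirst.trans (hmono _ _ le_rfl (mem_Icc.1 hi).1 (mem_Icc.1 hi).2)
  have hup : ∀ i ∈ Icc (f + 1) (k + 1), u i ≤ u (k + 1) := fun i hi =>
    hmono _ _ (mem_Icc.1 hi).1 (mem_Icc.1 hi).2 le_rfl
  rcases (by omega : k = f + 1 ∨ f + 3 ≤ k + 1) with rfl | hlong
  · have hU_le := le_of_prod_Icc_succ_le hfirst hps
    nlinarith
  · have hU_le := mul_le_of_prod_Icc_le hlong (by omega) hlow hup hps
    nlinarith

/-- Let `r ≥ 5`, `f ≤ r - 3`, `C = C(4r, r-1)`, `n > 6rC`, and let nonnegative integers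
`u (f+1) ≤ … ≤ u (r-1)` satisfy `u (r-1) ≥ (n-1)/2` and
`∏ u_i ≤ (r-2)·∑ u_i + f·C`.  If `u (f+1) ≥ r - 1`, then we reach a contradiction. -/
theorem stmt_8 (r f n : ℕ) (hr : 5 ≤ r) (hf : f + 3 ≤ r)
    (hn : 6 * r * Nat.choose (4 * r) (r - 1) < n)
    (u : ℕ → ℕ)
    (hmono : ∀ i j, f + 1 ≤ i → i ≤ j → j ≤ r - 1 → u i ≤ u j)
    (hlast : n - 1 ≤ 2 * u (r - 1))
    (hps : ∏ i ∈ Finset.Icc (f + 1) (r - 1), u i ≤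
      (r - 2) * ∑ i ∈ Finset.Icc (f + 1) (r - 1), u i + f * Nat.choose (4 * r) (r - 1))
    (hfirst : r - 1 ≤ u (f + 1)) :
    False :=
  stmt_8_general r f n hf hn u hmono hlast hps hfirst
end
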